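/- Let n ≥ 1, let Θ ∈ ℂ^{n×n} be symmetric with positive definite real part, and let ν ∈ ℕⁿ. Then for every r ∈ ℝⁿ the Laplacian of HG_Θ^ν satisfies: Δ HG_Θ^ν(r) = −HG_Θ^ν(r)·tr(Θ⁻¹) + 2·tr(Θ⁻²·Φ_ν(r)) + (Θ⁻¹r)ᵀ·[ HG_Θ^ν(r)·Θ⁻¹r − 4·Θ⁻¹·φ_ν(r) ]. -/

import Mathlib

open scoped BigOperators
open MeasureTheory Matrix

noncomputable section

namespace AHGPaper

/-- Complex partial derivative in coordinate `j`. -/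
def cpderiv {n : ℕ} (j : Fin n) (f : (Fin n → ℂ) → ℂ) : (Fin n → ℂ) → ℂ :=
  fun x => deriv (fun t : ℂ => f (Function.update x j t)) (x j)

/-- Mixed partial derivative of multi-order `ν`. -/
def mpderiv {n : ℕ} (ν : Fin n → ℕ) (f : (Fin n → ℂ) → ℂ) : (Fin n → ℂ) → ℂ :=
  (List.finRange n).foldr (fun j g => (cpderiv j)^[ν j] g) f

/-- The anisotropic Hermite-Gauss (AHG) function `HG_Θ^ν`. -/
def HG {n : ℕ} (Θ : Matrix (Fin n) (Fin n) ℂ) (ν : Fin n → ℕ) (r : Fin n → ℂ) : ℂ :=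
  (-(1 / (Real.sqrt 2 : ℂ))) ^ (∑ j, ν j) *
    ((∏ j, ((ν j).factorial : ℂ)) ^ (-(1 / 2 : ℂ))) *
    (((Real.pi : ℂ) ^ n * Θ.det) ^ (-(1 / 4 : ℂ))) *
    Complex.exp ((1 / 2 : ℂ) * (r ⬝ᵥ Θ⁻¹.mulVec r)) *
    mpderiv ν (fun x => Complex.exp (-(x ⬝ᵥ Θ⁻¹.mulVec x))) r

/-- The dual anisotropic Hermite-Gauss function `H̃G_Θ^ν`. -/
def HGd {n : ℕ} (Θ : Matrix (Fin n) (Fin n) ℂ) (ν : Fin n → ℕ) (r : Fin n → ℂ) : ℂ :=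
  (-(1 / (Real.sqrt 2 : ℂ))) ^ (∑ j, ν j) *
    ((∏ j, ((ν j).factorial : ℂ)) ^ (-(1 / 2 : ℂ))) *
    (((Real.pi : ℂ) ^ n * Θ.det) ^ (-(1 / 4 : ℂ))) *
    Complex.exp ((1 / 2 : ℂ) * ((Θ⁻¹.mulVec r) ⬝ᵥ Θ.mulVec (Θ⁻¹.mulVec r))) *
    mpderiv ν (fun x => Complex.exp (-(x ⬝ᵥ Θ.mulVec x))) (Θ⁻¹.mulVec r)

/-- Physicists' Hermite polynomial via Rodrigues' formula. -/
def hermiteH (k : ℕ) (z : ℂ) : ℂ :=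
  (-1) ^ k * Complex.exp (z ^ 2) * iteratedDeriv k (fun w => Complex.exp (-(w ^ 2))) z

/-- The `k`-th univariate Hermite-Gauss function `ψ_k`. -/
def psi (k : ℕ) (z : ℂ) : ℂ :=
  ((Real.sqrt Real.pi * 2 ^ k * k.factorial : ℝ) : ℂ) ^ (-(1 / 2 : ℂ)) *
    Complex.exp (-(z ^ 2) / 2) * hermiteH k z

/-- The vector `φ_ν(r)` whose `k`-th entry is `(1/√2)·√(ν_k)·HG_Θ^{ν-ε_k}(r)`. -/
def phiV {n : ℕ} (Θ : Matrix (Fin n) (Fin n) ℂ) (ν : Fin n → ℕ) (r : Fin n → ℂ) :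
    Fin n → ℂ :=
  fun k => (1 / (Real.sqrt 2 : ℂ)) * (Real.sqrt (ν k) : ℂ) *
    HG Θ (fun j => ν j - if j = k then 1 else 0) r

/-- The matrix `Φ_ν(r)`. -/
def PhiM {n : ℕ} (Θ : Matrix (Fin n) (Fin n) ℂ) (ν : Fin n → ℕ) (r : Fin n → ℂ) :
    Matrix (Fin n) (Fin n) ℂ :=
  Matrix.of fun j k =>
    if j = k then
      (Real.sqrt (ν j * (ν j - 1)) : ℂ) * HG Θ (fun l => ν l - if l = j then 2 else 0) r
    else
      (Real.sqrt (ν j * ν k) : ℂ) *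
        HG Θ (fun l => ν l - ((if l = j then 1 else 0) + (if l = k then 1 else 0))) r

/-- The `n`-dimensional linear canonical transform with parameter matrix `[[a,b],[c,d]]`. -/
def LCT {n : ℕ} (a b d : ℂ) (f : (Fin n → ℝ) → ℂ) (ζ : Fin n → ℝ) : ℂ :=
  (1 / (2 * (Real.pi : ℂ) * Complex.I * b)) ^ ((n : ℂ) / 2) *
    Complex.exp (Complex.I * d / (2 * b) * ((fun i => (ζ i : ℂ)) ⬝ᵥ fun i => (ζ i : ℂ))) *
    ∫ r : Fin n → ℝ, f r *
      Complex.exp (-(Complex.I / (2 * b)) *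
        ((fun i => (r i : ℂ)) ⬝ᵥ fun i => 2 * (ζ i : ℂ) - a * (r i : ℂ)))

/-- The `n`-dimensional Fourier transform `(2π)^{-n/2} ∫ f(r) e^{-i ζ·r} dr`. -/
def FT {n : ℕ} (f : (Fin n → ℝ) → ℂ) (ζ : Fin n → ℝ) : ℂ :=
  ((2 * Real.pi : ℝ) : ℂ) ^ (-(n : ℂ) / 2) *
    ∫ r : Fin n → ℝ,
      f r * Complex.exp (-Complex.I * ((fun i => (ζ i : ℂ)) ⬝ᵥ fun i => (r i : ℂ)))

/-- The Wigner-Ville distribution. -/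
def WVD {n : ℕ} (f : (Fin n → ℝ) → ℂ) (r ζ : Fin n → ℝ) : ℂ :=
  ((2 * Real.pi : ℝ) : ℂ) ^ (-(n : ℂ) / 2) *
    ∫ ξ : Fin n → ℝ,
      f (fun i => r i - ξ i / 2) * (starRingEnd ℂ) (f (fun i => r i + ξ i / 2)) *
        Complex.exp (-Complex.I * ((fun i => (ζ i : ℂ)) ⬝ᵥ fun i => (ξ i : ℂ)))

end AHGPaper

/-!
Write `A = Θ⁻¹`. Derivatives of `e^{-xᵀAx}` are polynomial multiples of it:
`∂^ν e^{-xᵀAx} = P_ν e^{-xᵀAx}` with `P_ν = D^ν 1` for the raising operators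
`D_k = ∂_k - 2 (Ax)_k`, which commute because `A` is symmetric. Hence
`HG_Θ^ν = c_ν P_ν e^{-xᵀAx/2}`. The polynomials obey the lowering rule
`∂_k P_ν = -2 ∑_l A_kl ν_l P_{ν-ε_l}` and the constants obey
`c_ν ν_l = -(1/√2) √ν_l c_{ν-ε_l}`, so `c_ν ∂_k P_ν` and `c_ν ∂_k² P_ν` are expressed through
`φ_ν` and `Φ_ν`. Expanding `∂_k² (P_ν e^{-xᵀAx/2})` and summing over `k` gives the formula.
-/

open MvPolynomial

namespace MvPolynomial

variable {R σ : Type*} [CommRing R]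

theorem pderiv_pderiv_comm (i j : σ) (p : MvPolynomial σ R) :
    pderiv i (pderiv j p) = pderiv j (pderiv i p) := by
  have h : ⁅pderiv i, pderiv j⁆ = (0 : Derivation R (MvPolynomial σ R) (MvPolynomial σ R)) :=
    derivation_ext fun k => by
      classical
      rw [Derivation.commutator_apply, pderiv_X, pderiv_X, Pi.single_apply, Pi.single_apply]
      split_ifs <;> simp
  have hp := congr($h p)
  rwa [Derivation.commutator_apply, Derivation.zero_apply, sub_eq_zero] at hp

@[simp]
theorem pderiv_ofNat (i : σ) (m : ℕ) [m.AtLeastTwo] :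
    pderiv i (ofNat(m) : MvPolynomial σ R) = 0 :=
  (pderiv i).map_natCast m

theorem hasDerivAt_eval_update {𝕜 : Type*} [NontriviallyNormedField 𝕜] [DecidableEq σ]
    (p : MvPolynomial σ 𝕜) (x : σ → 𝕜) (k : σ) :
    HasDerivAt (fun t => eval (Function.update x k t) p) (eval x (pderiv k p)) (x k) := by
  induction p using MvPolynomial.induction_on with
  | C a => simpa using hasDerivAt_const (x k) a
  | add p q hp hq => simpa using hp.fun_add hq
  | mul_X p i hp =>
    rcases eq_or_ne i k with rfl | hik
    · simpa [pderiv_X_self, add_comm, mul_comm] using hp.fun_mul (hasDerivAt_id (x i))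
    · simpa [Function.update_of_ne hik, pderiv_X_of_ne hik, mul_comm] using hp.mul_const (x i)

end MvPolynomial

namespace List

variable {ι α β : Type*}

theorem foldr_iterate_semiconj (F : α → β) {f : ι → α → α} {g : ι → β → β}
    (h : ∀ i, Function.Semiconj F (f i) (g i)) (m : ι → ℕ) (l : List ι) (a : α) :
    F (l.foldr (fun i a => (f i)^[m i] a) a) = l.foldr (fun i b => (g i)^[m i] b) (F a) := by
  induction l with
  | nil => rfl
  | cons i l ih => rw [foldr_cons, foldr_cons, ((h i).iterate_right (m i)).eq, ih]

theorem foldr_iterate_add_single [DecidableEq ι] {f : ι → α → α}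
    (hf : ∀ i j, Function.Commute (f i) (f j)) (m : ι → ℕ) {l : List ι} (hl : l.Nodup)
    {k : ι} (hk : k ∈ l) (a : α) :
    l.foldr (fun i a => (f i)^[(m + Pi.single k 1 : ι → ℕ) i] a) a =
      f k (l.foldr (fun i a => (f i)^[m i] a) a) := by
  induction l with
  | nil => simp at hk
  | cons i l ih =>
    obtain ⟨hil, hl⟩ := nodup_cons.mp hl
    rw [foldr_cons, foldr_cons]
    rcases eq_or_ne i k with rfl | hik
    · have hrest : l.foldr (fun j a => (f j)^[(m + Pi.single i 1 : ι → ℕ) j] a) a =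
          l.foldr (fun j a => (f j)^[m j] a) a :=
        foldr_ext _ _ _ fun j hj _ => by
          rw [Pi.add_apply, Pi.single_eq_of_ne (ne_of_mem_of_not_mem hj hil), add_zero]
      rw [hrest, Pi.add_apply, Pi.single_eq_same, Function.iterate_succ_apply']
    · rw [Pi.add_apply, Pi.single_eq_of_ne hik, add_zero, ih hl (mem_of_ne_of_mem hik.symm hk),
        ((hf k i).iterate_right (m i)).eq]

end List

section MultiIndex

variable {ι : Type*} [DecidableEq ι]

theorem Pi.single_one_le_of_pos {ν : ι → ℕ} {l : ι} (h : 0 < ν l) : Pi.single l 1 ≤ ν := by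
  intro i
  rcases eq_or_ne i l with rfl | hi
  · simpa using Nat.succ_le_of_lt h
  · simp [hi]

theorem Pi.induction_on_add_single [Fintype ι] {motive : (ι → ℕ) → Prop} (zero : motive 0)
    (add_single : ∀ ν i, motive ν → motive (ν + Pi.single i 1)) (ν : ι → ℕ) : motive ν := by
  rw [← Finset.univ_sum_single ν]
  induction (Finset.univ : Finset ι) using Finset.induction_on with
  | empty => simpa
  | insert i s hi ih =>
    rw [Finset.sum_insert hi, add_comm]
    induction ν i with
    | zero => simpa
    | succ m ihm => rw [Pi.single_add, ← add_assoc]; exact add_single _ i ihm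

theorem prod_factorial_add_single [Fintype ι] (ν : ι → ℕ) (l : ι) :
    ∏ j, ((ν + Pi.single l 1 : ι → ℕ) j).factorial = (ν l + 1) * ∏ j, (ν j).factorial := by
  have h : ∀ j, ((ν + Pi.single l 1 : ι → ℕ) j).factorial =
      (if j = l then ν l + 1 else 1) * (ν j).factorial := by
    intro j
    rcases eq_or_ne j l with rfl | hj
    · simp [Nat.factorial_succ]
    · simp [hj]
  simp only [h, Finset.prod_mul_distrib, Finset.prod_ite_eq', Finset.mem_univ, if_true]

end MultiIndex

theorem Complex.natCast_cpow_neg_half (m : ℕ) :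
    (m : ℂ) ^ (-(1 / 2 : ℂ)) = (Real.sqrt m : ℂ)⁻¹ := by
  rw [show (m : ℂ) = ((m : ℝ) : ℂ) by simp, show -(1 / 2 : ℂ) = ((-(1 / 2) : ℝ) : ℂ) by simp,
    ← Complex.ofReal_cpow (Nat.cast_nonneg m), Real.sqrt_eq_rpow,
    Real.rpow_neg (Nat.cast_nonneg m), Complex.ofReal_inv]

theorem Matrix.trace_mul_mul_of_isSymm {ι R : Type*} [Fintype ι] [CommSemiring R]
    {A : Matrix ι ι R} (hA : A.IsSymm) (M : Matrix ι ι R) :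
    (A * A * M).trace = ∑ k, ∑ l, ∑ m, A k l * A k m * M l m := by
  calc (A * A * M).trace = (A * M * Aᵀ).trace := by rw [hA.eq, trace_mul_cycle A M A]
    _ = ∑ k, ∑ l, ∑ m, A k l * A k m * M l m := by
      simp only [trace, diag, mul_apply, transpose_apply, Finset.sum_mul]
      exact Finset.sum_congr rfl fun k _ => Finset.sum_comm.trans (by simp only [mul_right_comm])

namespace AHGPaper

section HermitePolynomials

variable {R σ : Type*} [CommRing R] [Fintype σ]

def linPoly (A : Matrix σ σ R) (k : σ) : MvPolynomial σ R :=
  ∑ l, C (A k l) * X l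

def quadPoly (A : Matrix σ σ R) : MvPolynomial σ R :=
  ∑ k, X k * linPoly A k

@[simp]
theorem eval_linPoly (A : Matrix σ σ R) (k : σ) (x : σ → R) :
    eval x (linPoly A k) = (A *ᵥ x) k := by
  simp [linPoly, mulVec, dotProduct]

@[simp]
theorem eval_quadPoly (A : Matrix σ σ R) (x : σ → R) :
    eval x (quadPoly A) = x ⬝ᵥ A *ᵥ x := by
  simp [quadPoly, dotProduct]

@[simp]
theorem pderiv_linPoly (A : Matrix σ σ R) (k j : σ) : pderiv j (linPoly A k) = C (A k j) := by
  classical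
  simp [linPoly, pderiv_X, Pi.single_apply]

theorem pderiv_quadPoly {A : Matrix σ σ R} (hA : A.IsSymm) (j : σ) :
    pderiv j (quadPoly A) = 2 * linPoly A j := by
  classical
  simp only [quadPoly, map_sum, pderiv_mul, pderiv_X, pderiv_linPoly, Finset.sum_add_distrib,
    Pi.single_apply, ite_mul, one_mul, zero_mul, Finset.sum_ite_eq', Finset.mem_univ, if_true]
  simp only [linPoly, ← hA.apply j, mul_comm (X _), two_mul]

def hermiteRaise (A : Matrix σ σ R) (k : σ) : MvPolynomial σ R →ₗ[R] MvPolynomial σ R :=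
  (pderiv k).toLinearMap - LinearMap.mulLeft R (2 * linPoly A k)

theorem hermiteRaise_apply (A : Matrix σ σ R) (k : σ) (p : MvPolynomial σ R) :
    hermiteRaise A k p = pderiv k p - 2 * linPoly A k * p :=
  rfl

theorem pderiv_hermiteRaise (A : Matrix σ σ R) (j k : σ) (p : MvPolynomial σ R) :
    pderiv k (hermiteRaise A j p) = hermiteRaise A j (pderiv k p) - (2 * A j k) • p := by
  simp only [hermiteRaise_apply, map_sub, pderiv_mul, pderiv_linPoly, pderiv_pderiv_comm k j,
    pderiv_ofNat, smul_eq_C_mul, map_mul, map_ofNat]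
  ring

theorem hermiteRaise_commute {A : Matrix σ σ R} (hA : A.IsSymm) (i j : σ) :
    Function.Commute (hermiteRaise A i) (hermiteRaise A j) := by
  intro p
  simp only [hermiteRaise_apply, map_sub, pderiv_mul, pderiv_linPoly, pderiv_pderiv_comm i j,
    pderiv_ofNat, hA.apply i j]
  ring

variable {n : ℕ}

def hermitePoly (A : Matrix (Fin n) (Fin n) R) (ν : Fin n → ℕ) : MvPolynomial (Fin n) R :=
  (List.finRange n).foldr (fun j p => (hermiteRaise A j)^[ν j] p) 1

theorem hermitePoly_zero (A : Matrix (Fin n) (Fin n) R) : hermitePoly A 0 = 1 :=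
  List.foldr_fixed' (fun _ => rfl) _

theorem hermitePoly_add_single {A : Matrix (Fin n) (Fin n) R} (hA : A.IsSymm) (ν : Fin n → ℕ)
    (k : Fin n) : hermitePoly A (ν + Pi.single k 1) = hermiteRaise A k (hermitePoly A ν) :=
  List.foldr_iterate_add_single (hermiteRaise_commute hA) ν (List.nodup_finRange n)
    (List.mem_finRange k) 1

theorem pderiv_hermitePoly {A : Matrix (Fin n) (Fin n) R} (hA : A.IsSymm) (ν : Fin n → ℕ)
    (k : Fin n) :
    pderiv k (hermitePoly A ν) = -∑ l, (2 * A k l * ν l) • hermitePoly A (ν - Pi.single l 1) := by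
  induction ν using Pi.induction_on_add_single with
  | zero => simp [hermitePoly_zero]
  | add_single ν j ih =>
    have hstep : ∀ l, (2 * A k l * ν l) • hermiteRaise A j (hermitePoly A (ν - Pi.single l 1)) =
        (2 * A k l * ν l) • hermitePoly A (ν + Pi.single j 1 - Pi.single l 1) := by
      intro l
      rcases Nat.eq_zero_or_pos (ν l) with h | h
      · simp [h]
      · rw [← hermitePoly_add_single hA, tsub_add_eq_add_tsub (Pi.single_one_le_of_pos h)]
    have hcoef : ∀ l, (((ν + Pi.single j 1 : Fin n → ℕ) l : ℕ) : R) =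
        ν l + if l = j then 1 else 0 := by
      intro l; simp [Pi.single_apply]
    rw [hermitePoly_add_single hA, pderiv_hermiteRaise, ih, map_neg, map_sum]
    simp only [map_smul, hstep, hcoef, mul_add, add_smul, Finset.sum_add_distrib, mul_ite,
      ite_smul, mul_zero, zero_smul, Finset.sum_ite_eq', Finset.mem_univ, if_true, mul_one,
      add_tsub_cancel_right, hA.apply k j]
    abel

end HermitePolynomials

variable {n : ℕ}

theorem cpderiv_eval_mul_cexp_eval (p q : MvPolynomial (Fin n) ℂ) (k : Fin n) :
    cpderiv k (fun x => eval x p * Complex.exp (eval x q)) =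
      fun x => eval x (pderiv k p + pderiv k q * p) * Complex.exp (eval x q) := by
  funext x
  have h := (hasDerivAt_eval_update p x k).fun_mul (hasDerivAt_eval_update q x k).cexp
  rw [cpderiv, h.deriv]
  simp only [Function.update_eq_self, eval_add, eval_mul]
  ring

theorem mpderiv_cexp_neg_quadForm {A : Matrix (Fin n) (Fin n) ℂ} (hA : A.IsSymm)
    (ν : Fin n → ℕ) :
    mpderiv ν (fun x => Complex.exp (-(x ⬝ᵥ A *ᵥ x))) =
      fun x => eval x (hermitePoly A ν) * Complex.exp (-(x ⬝ᵥ A *ᵥ x)) := by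
  let F : MvPolynomial (Fin n) ℂ → (Fin n → ℂ) → ℂ :=
    fun p x => eval x p * Complex.exp (eval x (-quadPoly A))
  have hF : ∀ k, Function.Semiconj F (hermiteRaise A k) (cpderiv k) := fun k p => by
    simp only [F]
    rw [cpderiv_eval_mul_cexp_eval, map_neg, pderiv_quadPoly hA, hermiteRaise_apply]
    ring_nf
  simpa [F, hermitePoly, mpderiv] using (List.foldr_iterate_semiconj F hF ν _ 1).symm

def hgConst (Θ : Matrix (Fin n) (Fin n) ℂ) (ν : Fin n → ℕ) : ℂ :=
  (-(1 / (Real.sqrt 2 : ℂ))) ^ (∑ j, ν j) *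
    ((∏ j, ((ν j).factorial : ℂ)) ^ (-(1 / 2 : ℂ))) *
    (((Real.pi : ℂ) ^ n * Θ.det) ^ (-(1 / 4 : ℂ)))

theorem HG_apply {Θ : Matrix (Fin n) (Fin n) ℂ} (hΘ : Θ.IsSymm) (ν : Fin n → ℕ)
    (x : Fin n → ℂ) :
    HG Θ ν x = hgConst Θ ν * eval x (hermitePoly Θ⁻¹ ν) *
      Complex.exp (-(1 / 2) * (x ⬝ᵥ Θ⁻¹ *ᵥ x)) := by
  rw [HG, mpderiv_cexp_neg_quadForm hΘ.inv, hgConst,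
    show -(1 / 2) * (x ⬝ᵥ Θ⁻¹ *ᵥ x) = 1 / 2 * (x ⬝ᵥ Θ⁻¹ *ᵥ x) + -(x ⬝ᵥ Θ⁻¹ *ᵥ x) by ring,
    Complex.exp_add]
  ring

theorem HG_eq {Θ : Matrix (Fin n) (Fin n) ℂ} (hΘ : Θ.IsSymm) (ν : Fin n → ℕ) :
    HG Θ ν = fun x => eval x (hgConst Θ ν • hermitePoly Θ⁻¹ ν) *
      Complex.exp (eval x ((-(1 / 2) : ℂ) • quadPoly Θ⁻¹)) := by
  funext x
  simp only [HG_apply hΘ, smul_eval, eval_quadPoly, mul_assoc]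

theorem hgConst_mul_natCast (Θ : Matrix (Fin n) (Fin n) ℂ) (ν : Fin n → ℕ) (l : Fin n) :
    hgConst Θ ν * ν l = -(1 / (Real.sqrt 2 : ℂ)) * (Real.sqrt (ν l) : ℂ) *
      hgConst Θ (ν - Pi.single l 1) := by
  rcases Nat.eq_zero_or_pos (ν l) with h | h
  · simp [h]
  obtain ⟨μ, rfl⟩ : ∃ μ, ν = μ + Pi.single l 1 :=
    ⟨ν - Pi.single l 1, (tsub_add_cancel_of_le (Pi.single_one_le_of_pos h)).symm⟩
  have hsum : ∑ j, (μ + Pi.single l 1 : Fin n → ℕ) j = ∑ j, μ j + 1 := by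
    simp [Finset.sum_add_distrib]
  have hprod : ∏ j, (((μ + Pi.single l 1 : Fin n → ℕ) j).factorial : ℂ) =
      (((μ l + 1) * ∏ j, (μ j).factorial : ℕ) : ℂ) := by
    rw [← prod_factorial_add_single, Nat.cast_prod]
  have ha : (Real.sqrt (μ l + 1 : ℕ) : ℂ) ≠ 0 := by
    rw [Complex.ofReal_ne_zero]; positivity
  have ha2 : ((μ l + 1 : ℕ) : ℂ) =
      (Real.sqrt (μ l + 1 : ℕ) : ℂ) * (Real.sqrt (μ l + 1 : ℕ) : ℂ) := by
    rw [← Complex.ofReal_mul, Real.mul_self_sqrt (Nat.cast_nonneg _), Complex.ofReal_natCast]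
  rw [hgConst, hgConst, add_tsub_cancel_right, hsum, hprod, ← Nat.cast_prod,
    Complex.natCast_cpow_neg_half, Complex.natCast_cpow_neg_half, Nat.cast_mul,
    Real.sqrt_mul (Nat.cast_nonneg _), Complex.ofReal_mul, mul_inv, pow_succ, Pi.add_apply,
    Pi.single_eq_same, ha2]
  field_simp

theorem phiV_apply (Θ : Matrix (Fin n) (Fin n) ℂ) (ν : Fin n → ℕ) (x : Fin n → ℂ) (l : Fin n) :
    phiV Θ ν x l =
      1 / (Real.sqrt 2 : ℂ) * (Real.sqrt (ν l) : ℂ) * HG Θ (ν - Pi.single l 1) x := by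
  have hidx : (fun j => ν j - if j = l then 1 else 0) = ν - Pi.single l 1 := by
    funext j; simp [Pi.single_apply]
  rw [phiV, hidx]

theorem PhiM_apply (Θ : Matrix (Fin n) (Fin n) ℂ) (ν : Fin n → ℕ) (x : Fin n → ℂ)
    (l m : Fin n) :
    PhiM Θ ν x l m = (Real.sqrt (ν l) : ℂ) * (Real.sqrt ((ν - Pi.single l 1 : Fin n → ℕ) m) : ℂ) *
      HG Θ (ν - Pi.single l 1 - Pi.single m 1) x := by
  rcases eq_or_ne l m with rfl | hlm
  · have hidx : (fun j => ν j - if j = l then 2 else 0) = ν - Pi.single l 1 - Pi.single l 1 := by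
      funext j; rcases eq_or_ne j l with rfl | hj <;> simp [*, Nat.sub_sub]
    have hsqrt : Real.sqrt (ν l * (ν l - 1)) =
        Real.sqrt (ν l) * Real.sqrt ((ν - Pi.single l 1 : Fin n → ℕ) l) := by
      rcases Nat.eq_zero_or_pos (ν l) with h | h
      · simp [h]
      · rw [← Real.sqrt_mul (Nat.cast_nonneg _)]; simp [Nat.cast_sub (Nat.succ_le_of_lt h)]
    simp only [PhiM, Matrix.of_apply, if_true, hidx, hsqrt, Complex.ofReal_mul]
  · have hidx : (fun j => ν j - ((if j = l then 1 else 0) + if j = m then 1 else 0)) =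
        ν - Pi.single l 1 - Pi.single m 1 := by
      funext j; simp [Pi.single_apply, Nat.sub_sub]
    simp only [PhiM, Matrix.of_apply, if_neg hlm, hidx, Real.sqrt_mul (Nat.cast_nonneg _),
      Complex.ofReal_mul, Pi.sub_apply, Pi.single_eq_of_ne hlm.symm, tsub_zero]

theorem hgConst_mul_eval_pderiv_hermitePoly {Θ : Matrix (Fin n) (Fin n) ℂ} (hΘ : Θ.IsSymm)
    (ν : Fin n → ℕ) (k : Fin n) (x : Fin n → ℂ) :
    hgConst Θ ν * eval x (pderiv k (hermitePoly Θ⁻¹ ν)) *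
        Complex.exp (-(1 / 2) * (x ⬝ᵥ Θ⁻¹ *ᵥ x)) = 2 * (Θ⁻¹ *ᵥ phiV Θ ν x) k := by
  rw [show (Θ⁻¹ *ᵥ phiV Θ ν x) k = ∑ l, Θ⁻¹ k l * phiV Θ ν x l from rfl]
  simp only [pderiv_hermitePoly hΘ.inv, map_neg, map_sum, smul_eval, phiV_apply, HG_apply hΘ]
  generalize Complex.exp (-(1 / 2) * (x ⬝ᵥ Θ⁻¹ *ᵥ x)) = g
  simp only [mul_neg, neg_mul, Finset.mul_sum, Finset.sum_mul, ← Finset.sum_neg_distrib]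
  refine Finset.sum_congr rfl fun l _ => ?_
  linear_combination (-2 * Θ⁻¹ k l * eval x (hermitePoly Θ⁻¹ (ν - Pi.single l 1)) * g) *
    hgConst_mul_natCast Θ ν l

theorem hgConst_mul_eval_pderiv_pderiv_hermitePoly {Θ : Matrix (Fin n) (Fin n) ℂ}
    (hΘ : Θ.IsSymm) (ν : Fin n → ℕ) (k : Fin n) (x : Fin n → ℂ) :
    hgConst Θ ν * eval x (pderiv k (pderiv k (hermitePoly Θ⁻¹ ν))) *
        Complex.exp (-(1 / 2) * (x ⬝ᵥ Θ⁻¹ *ᵥ x)) =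
      2 * ∑ l, ∑ m, Θ⁻¹ k l * Θ⁻¹ k m * PhiM Θ ν x l m := by
  have hs : (1 / (Real.sqrt 2 : ℂ)) ^ 2 = 1 / 2 := by
    rw [div_pow, ← Complex.ofReal_pow, Real.sq_sqrt zero_le_two]; norm_num
  simp only [pderiv_hermitePoly hΘ.inv, map_neg, map_sum, Derivation.map_smul, smul_eval,
    PhiM_apply, HG_apply hΘ]
  generalize Complex.exp (-(1 / 2) * (x ⬝ᵥ Θ⁻¹ *ᵥ x)) = g
  simp only [mul_neg, Finset.mul_sum, Finset.sum_mul, Finset.sum_neg_distrib, neg_neg]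
  refine Finset.sum_congr rfl fun l _ => Finset.sum_congr rfl fun m _ => ?_
  set μ : Fin n → ℕ := ν - Pi.single l 1
  set c := 4 * Θ⁻¹ k l * Θ⁻¹ k m * eval x (hermitePoly Θ⁻¹ (μ - Pi.single m 1)) * g
  linear_combination (c * μ m) * hgConst_mul_natCast Θ ν l -
    (c * (1 / (Real.sqrt 2 : ℂ)) * Real.sqrt (ν l)) * hgConst_mul_natCast Θ μ m +
    (c * Real.sqrt (ν l) * Real.sqrt (μ m) * hgConst Θ (μ - Pi.single m 1)) * hs

theorem cpderiv_cpderiv_HG {Θ : Matrix (Fin n) (Fin n) ℂ} (hΘ : Θ.IsSymm) (ν : Fin n → ℕ)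
    (k : Fin n) (x : Fin n → ℂ) :
    cpderiv k (cpderiv k (HG Θ ν)) x =
      -HG Θ ν x * Θ⁻¹ k k + 2 * ∑ l, ∑ m, Θ⁻¹ k l * Θ⁻¹ k m * PhiM Θ ν x l m +
        (Θ⁻¹ *ᵥ x) k * (HG Θ ν x * (Θ⁻¹ *ᵥ x) k - 4 * (Θ⁻¹ *ᵥ phiV Θ ν x) k) := by
  have hexpand : cpderiv k (cpderiv k (HG Θ ν)) x = hgConst Θ ν *
      (eval x (pderiv k (pderiv k (hermitePoly Θ⁻¹ ν))) -
        Θ⁻¹ k k * eval x (hermitePoly Θ⁻¹ ν) -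
        2 * (Θ⁻¹ *ᵥ x) k * eval x (pderiv k (hermitePoly Θ⁻¹ ν)) +
        (Θ⁻¹ *ᵥ x) k ^ 2 * eval x (hermitePoly Θ⁻¹ ν)) *
      Complex.exp (-(1 / 2) * (x ⬝ᵥ Θ⁻¹ *ᵥ x)) := by
    rw [HG_eq hΘ, cpderiv_eval_mul_cexp_eval, cpderiv_eval_mul_cexp_eval]
    simp only [Derivation.map_smul, pderiv_quadPoly hΘ.inv, map_add, pderiv_mul, pderiv_ofNat,
      pderiv_linPoly, smul_eval, eval_mul, eval_C, eval_linPoly, eval_quadPoly, map_ofNat,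
      map_zero]
    ring
  rw [hexpand, HG_apply hΘ, ← hgConst_mul_eval_pderiv_pderiv_hermitePoly hΘ]
  linear_combination (-2 * (Θ⁻¹ *ᵥ x) k) * hgConst_mul_eval_pderiv_hermitePoly hΘ ν k x

end AHGPaper

open AHGPaper

theorem ahg_laplacian_general (n : ℕ) (Θ : Matrix (Fin n) (Fin n) ℂ)
    (hsym : Θ.IsSymm)
    (ν : Fin n → ℕ) (r : Fin n → ℝ) :
    (∑ j, cpderiv j (cpderiv j (HG Θ ν)) (fun i => (r i : ℂ))) =
      -(HG Θ ν (fun i => (r i : ℂ))) * Θ⁻¹.trace +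
        2 * (Θ⁻¹ * Θ⁻¹ * PhiM Θ ν (fun i => (r i : ℂ))).trace +
        (Θ⁻¹.mulVec (fun i => (r i : ℂ))) ⬝ᵥ
          (fun k => HG Θ ν (fun i => (r i : ℂ)) * Θ⁻¹.mulVec (fun i => (r i : ℂ)) k -
            4 * Θ⁻¹.mulVec (phiV Θ ν (fun i => (r i : ℂ))) k) := by
  simp only [cpderiv_cpderiv_HG hsym, Finset.sum_add_distrib, ← Finset.mul_sum,
    trace_mul_mul_of_isSymm hsym.inv]
  rfl

/-- Laplacian of the AHG function. -/
theorem ahg_laplacian (n : ℕ) (hn : 1 ≤ n) (Θ : Matrix (Fin n) (Fin n) ℂ)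
    (hsym : Θ.IsSymm) (hpd : (Θ.map Complex.re).PosDef)
    (ν : Fin n → ℕ) (r : Fin n → ℝ) :
    (∑ j, cpderiv j (cpderiv j (HG Θ ν)) (fun i => (r i : ℂ))) =
      -(HG Θ ν (fun i => (r i : ℂ))) * Θ⁻¹.trace +
        2 * (Θ⁻¹ * Θ⁻¹ * PhiM Θ ν (fun i => (r i : ℂ))).trace +
        (Θ⁻¹.mulVec (fun i => (r i : ℂ))) ⬝ᵥ
          (fun k => HG Θ ν (fun i => (r i : ℂ)) * Θ⁻¹.mulVec (fun i => (r i : ℂ)) k -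
            4 * Θ⁻¹.mulVec (phiV Θ ν (fun i => (r i : ℂ))) k) :=
  ahg_laplacian_general n Θ hsym ν r
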